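/- arXiv:2410.12714 — 6 statements merged into one kernel-verified Lean document; each statement's English description precedes it below -/
import Mathlib

section
/- Let x_0 be an infinite word over Σ_0. Then sup{PL(u) : u a nonempty finite factor of x_0} is finite if and only if sup{PPL(pad(u)) : u a nonempty finite factor of x_0} is finite. -/
namespace PalLen

variable {α : Type*}

/-- `u` is a palindrome (the empty word counts; "nonempty palindrome" adds `u ≠ []`). -/
def IsPal (u : List α) : Prop := u.reverse = u

/-- `ξ` is a period of the word `t` (0-indexed: `t[i] = t[i+ξ]` whenever both indices are
valid); in particular every `ξ ≥ |t|` is a period. -/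
def IsPeriod (t : List α) (ξ : ℕ) : Prop :=
  1 ≤ ξ ∧ ∀ i : ℕ, i + ξ < t.length → t[i]? = t[i + ξ]?

/-- the minimal period of `t` -/
noncomputable def mper (t : List α) : ℕ := sInf {ξ | IsPeriod t ξ}

/-- `order(t) = |t| / mper(t) ∈ ℚ` -/
noncomputable def wOrder (t : List α) : ℚ := (t.length : ℚ) / (mper t : ℚ)

/-- a non-periodic palindromic couple -/
def PalCouple (p₁ p₂ : List α) : Prop :=
  IsPal p₁ ∧ IsPal p₂ ∧ p₂ ≠ [] ∧ wOrder (p₁ ++ p₂ ++ p₁) < 2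

/-- `wpow w n = w^n` -/
def wpow (w : List α) : ℕ → List α
  | 0 => []
  | n + 1 => w ++ wpow w n

/-- `u` is a factor of the infinite word `w^∞` -/
def FactorOfPow (u w : List α) : Prop := ∃ n : ℕ, u <:+: wpow w n

/-- `u` is a prefix of the infinite word `w^∞` -/
def PrefixOfPow (u w : List α) : Prop := ∃ n : ℕ, u <+: wpow w n

/-- the palindromic length of a word -/
noncomputable def PL (u : List α) : ℕ :=
  sInf {k | ∃ ps : List (List α), ps.length = k ∧ (∀ p ∈ ps, p ≠ [] ∧ IsPal p) ∧
    ps.flatten = u}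

/-- `u` is a (finite) factor of the infinite word `x` -/
def FactorOfInf (u : List α) (x : ℕ → α) : Prop :=
  ∃ i : ℕ, u = (List.range u.length).map fun j => x (i + j)

/-- `u` is a prefix of the infinite word `x` -/
def PrefixOfInf (u : List α) (x : ℕ → α) : Prop :=
  u = (List.range u.length).map fun j => x j

/-- `x = u v v v ⋯` for some finite words `u, v` with `v` nonempty -/
def UltimatelyPeriodic (x : ℕ → α) : Prop :=
  ∃ u v : List α, v ≠ [] ∧ (∀ i : ℕ, i < u.length → u[i]? = some (x i)) ∧
    ∀ i : ℕ, v[i % v.length]? = some (x (u.length + i))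

/-- padding of an infinite word over `Σ₀ = α`; the padding letter `b` is `none`,
the letters of `Σ₀` are embedded via `some`.  (0-indexed: even positions carry `b`.) -/
def padInf (x : ℕ → α) : ℕ → Option α :=
  fun i => if i % 2 = 0 then none else some (x (i / 2))

/-- padding of a finite word: `pad(u₁u₂⋯uₙ) = u₁ b u₂ b ⋯ b uₙ` -/
def padF (u : List α) : List (Option α) := List.intersperse none (u.map some)

/-- the padded palindromic length: minimal `k` with `w = p₁ b p₂ b ⋯ b p_k`,
each `pᵢ` a nonempty palindrome -/
noncomputable def PPL (w : List (Option α)) : ℕ :=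
  sInf {k | ∃ ps : List (List (Option α)), ps.length = k ∧
    (∀ p ∈ ps, p ≠ [] ∧ IsPal p) ∧ (List.intersperse [none] ps).flatten = w}

/-- the set of nonempty non-periodic palindromic prefixes of `t` -/
def NPP (t : List α) : Set (List α) :=
  {p | p ≠ [] ∧ p <+: t ∧ IsPal p ∧ wOrder p < 2}

/-- the set of nonempty non-periodic palindromic prefixes of an infinite word -/
def NPPInf (x : ℕ → α) : Set (List α) :=
  {p | p ≠ [] ∧ PrefixOfInf p x ∧ IsPal p ∧ wOrder p < 2}

/-- a word is ordinary if no factor has more nonempty non-periodic palindromic prefixes -/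
def Ordinary (t : List α) : Prop := ∀ u : List α, u <:+: t → (NPP u).ncard ≤ (NPP t).ncard

/-- `seg z i j = z[i,j]` (1-indexed, inclusive) -/
def seg (z : List α) (i j : ℕ) : List α := (z.drop (i - 1)).take (j - i + 1)

/-- `Spread(D, ξ)` restricted to ℕ -/
def Spread (D : Set ℕ) (ξ : ℕ) : Set ℕ :=
  {n | ∃ i ∈ D, ∃ a : ℤ, (n : ℤ) = (i : ℤ) + a * (ξ : ℤ)}

/-- `Close(D) = [min D, max D]` for nonempty `D`, `∅` otherwise -/
def Close (D : Set ℕ) : Set ℕ := {n | D.Nonempty ∧ sInf D ≤ n ∧ n ≤ sSup D}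

open Classical in
/-- the diameter of a set -/
noncomputable def diam (D : Set ℕ) : ℕ :=
  if D.Nonempty then sSup D - sInf D + 1 else 0

/-- `D'` is a ξ-cut of `D` -/
def IsCut (D : Set ℕ) (ξ : ℕ) (D' : Set ℕ) : Prop :=
  D' ⊆ D ∧ (D' = ∅ ∨ diam D' ≤ ξ)

variable (z : List α)

/-- `h = |NPP(z)|` -/
noncomputable def hNPP : ℕ := (NPP z).ncard

/-- `θ(m) = (100h)^m` -/
noncomputable def theta (m : ℕ) : ℕ := (100 * hNPP z) ^ m

/-- the ambient set `W` of candidate nested periodic structures -/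
def NPSW : Set (Set ℕ × ℕ) :=
  {Dξ | Dξ.1.Nonempty ∧ Dξ.1 ⊆ Set.Icc 1 z.length ∧
    Dξ.1 = Spread Dξ.1 Dξ.2 ∩ Close Dξ.1 ∧
    IsPeriod (seg z (sInf Dξ.1) (sSup Dξ.1)) Dξ.2}

/-- nested periodic structures of degree `m` -/
def NestPer : ℕ → Set (Set ℕ × ℕ)
  | 0 => {Dξ ∈ NPSW z | Dξ.1.ncard = 1}
  | m + 1 => {Dξ ∈ NPSW z | ∀ D' : Set ℕ, IsCut Dξ.1 Dξ.2 D' →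
      ∃ M : Set (Set ℕ × ℕ), M ⊆ NestPer m ∧ M.Finite ∧ M.ncard ≤ theta z (m + 1) ∧
        D' ⊆ (⋃ C ∈ M, C.1) ∧ (⋃ C ∈ M, C.1) ⊆ Close D'}

/-- `ω(m, D)`: the minimal cardinality of an NPS cover of `D` of degree `m` -/
noncomputable def omegaMin (m : ℕ) (D : Set ℕ) : ℕ :=
  sInf {k | ∃ M : Set (Set ℕ × ℕ), M ⊆ NestPer z m ∧ M.Finite ∧ M.ncard = k ∧
    D ⊆ (⋃ C ∈ M, C.1) ∧ (⋃ C ∈ M, C.1) ⊆ Close D}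

/-- `FirmPalPrefix(n)` -/
def FirmPalPrefix (n : ℕ) : Set (List α) :=
  {p₀ ∈ NPP (z.drop (n - 1)) | ∀ p₁ p₂ : List α, PalCouple p₁ p₂ → p₁ ++ p₂ ++ p₁ = p₀ →
    ¬ (wpow (p₁ ++ p₂) 2 ++ p₁ <+: z.drop (n - 1))}

/-- `Γ(n)` -/
def Gamma (n : ℕ) : Set (List α × List α) :=
  {pq | PalCouple pq.1 pq.2 ∧ pq.1 ++ pq.2 ++ pq.1 <+: z.drop (n - 1) ∧
    (pq.1 ++ pq.2 ++ pq.1 ∈ FirmPalPrefix z n → pq.1 = [])}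

/-- palindromic extension tuples `(n, p₁, p₂, α)` of the position `n` -/
def PalExt (n : ℕ) : Set (ℕ × List α × List α × ℕ) :=
  {T | T.1 = n ∧ PalCouple T.2.1 T.2.2.1 ∧ 1 ≤ T.2.2.2 ∧
    ((wpow (T.2.1 ++ T.2.2.1) T.2.2.2 ++ T.2.1 <+: z.drop (n - 1) ∧
        T.2.1 ++ T.2.2.1 ++ T.2.1 ∉ FirmPalPrefix z n) ∨
      (T.2.1 = [] ∧ T.2.2.2 = 1 ∧ T.2.2.1 ∈ FirmPalPrefix z n))}

/-- palindromic extension tuples of a set of positions -/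
def PalExtSet (D : Set ℕ) : Set (ℕ × List α × List α × ℕ) := ⋃ n ∈ D, PalExt z n

/-- `σ(n, p₁, p₂, α) = n − 1 + |(p₁p₂)^α p₁|` -/
def sigmaPE (T : ℕ × List α × List α × ℕ) : ℕ :=
  T.1 - 1 + (wpow (T.2.1 ++ T.2.2.1) T.2.2.2 ++ T.2.1).length

/-- covering palindromes of the position `n` -/
def CovPalAll (n : ℕ) : Set (ℕ × ℕ) :=
  {q | 1 ≤ q.1 ∧ q.1 ≤ n ∧ n ≤ q.2 ∧ q.2 ≤ z.length ∧ IsPal (seg z q.1 q.2)}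

def CovPalAllLeft (n : ℕ) : Set (ℕ × ℕ) :=
  {q ∈ CovPalAll z n | 2 * n ≤ q.1 + q.2}

/-- edge covering palindromes of the position `n` -/
def CovPalEdge (n : ℕ) : Set (ℕ × ℕ) :=
  {q ∈ CovPalAll z n | 1 < q.1 → q.2 < z.length → ¬ IsPal (seg z (q.1 - 1) (q.2 + 1))}

def CovPalEdgeLeft (n : ℕ) : Set (ℕ × ℕ) := CovPalAllLeft z n ∩ CovPalEdge z n

/-- `Mirror(n₁, n₂, j) = n₁ + n₂ − j` -/
def Mirror (n₁ n₂ j : ℕ) : ℕ := n₁ + n₂ - j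

/-- the characterization of `toPalCouple(n₁, n₂) = (p₁, p₂)` -/
def IsToPalCouple (n₁ n₂ : ℕ) (p₁ p₂ : List α) : Prop :=
  PalCouple p₁ p₂ ∧
  ((seg z n₁ n₂ ∈ FirmPalPrefix z n₁ ∧ p₁ = [] ∧ p₂ = seg z n₁ n₂) ∨
    (seg z n₁ n₂ ∉ FirmPalPrefix z n₁ ∧ wpow (p₁ ++ p₂) 2 ++ p₁ <+: z.drop (n₁ - 1) ∧
      ∃ a : ℕ, 1 ≤ a ∧ seg z n₁ n₂ = wpow (p₁ ++ p₂) a ++ p₁))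

/-- compound covering palindromes of `n` -/
def CovPalCmd (n : ℕ) : Set (ℕ × ℕ) :=
  {q ∈ CovPalEdgeLeft z n | ∀ p₁ p₂ : List α, IsToPalCouple z n (Mirror q.1 q.2 n) p₁ p₂ →
    ¬ FactorOfPow (seg z q.1 q.2) (p₁ ++ p₂)}

/-- `(ν₁, ν₂, ξ)` is a run of `z` -/
def IsRun (ν₁ ν₂ ξ : ℕ) : Prop :=
  1 ≤ ν₁ ∧ ν₁ ≤ ν₂ ∧ ν₂ ≤ z.length ∧ IsPeriod (seg z ν₁ ν₂) ξ ∧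
  ξ ≤ ν₂ - ν₁ + 1 ∧
  (ν₂ < z.length → ¬ IsPeriod (seg z ν₁ (ν₂ + 1)) ξ) ∧
  (1 < ν₁ → ¬ IsPeriod (seg z (ν₁ - 1) ν₂) ξ) ∧
  ∃ p₁ p₂ : List α, PalCouple p₁ p₂ ∧ (p₁ ++ p₂).length = ξ ∧ p₁ ++ p₂ <+: seg z ν₁ ν₂

/-- the characterization of `pToRun(n₁, n₂) = r` -/
def IsPToRun (n₁ n₂ : ℕ) (r : ℕ × ℕ × ℕ) : Prop :=
  IsRun z r.1 r.2.1 r.2.2 ∧ r.1 ≤ n₁ ∧ n₂ ≤ r.2.1 ∧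
  ∃ p₁ p₂ : List α, IsToPalCouple z n₁ n₂ p₁ p₂ ∧ r.2.2 = (p₁ ++ p₂).length

/-- `pToRun(X)` as a set of runs -/
def pToRunImage (X : Set (ℕ × ℕ)) : Set (ℕ × ℕ × ℕ) :=
  {r | ∃ q ∈ X, IsPToRun z q.1 q.2 r}

/-- the collection `UC` -/
def UC : Set (Set ℕ) :=
  {S | S ⊆ Set.Icc 1 z.length ∧ ∀ μ₁ μ₂ ξ : ℕ, 1 ≤ μ₁ → μ₁ ≤ μ₂ → μ₂ ≤ z.length →
    IsPeriod (seg z μ₁ μ₂) ξ →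
    ∃ E : Set ℕ, E ⊆ Set.Icc μ₁ μ₂ ∧ E.Finite ∧ E.ncard ≤ 8 ∧
      S ∩ (⋃ δ ∈ E, Set.Icc δ (δ + ξ - 1)) = S ∩ Set.Icc μ₁ μ₂}

end PalLen

namespace PalLen

variable {α : Type*}

/-- the sets `B_j` of base positions, built from the chain `zs 1, …, zs h` of
non-periodic palindromic prefixes and the middle palindromes `zh i` -/
def BaseB (zs zh : ℕ → List α) : ℕ → Set (ℕ × ℕ)
  | 0 => ∅
  | 1 => {(1, 1)}
  | j + 2 => BaseB zs zh (j + 1) ∪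
      ((fun q : ℕ × ℕ => (q.1, q.2 + (zs (j + 1)).length + (zh (j + 1)).length)) ''
        BaseB zs zh (j + 1)) ∪
      {(j + 2, 1)}

end PalLen

namespace PalLenAux
open List PalLen

variable {γ : Type*}

theorem intersperse_append' (a : γ) : ∀ (l₁ l₂ : List γ), l₁ ≠ [] → l₂ ≠ [] →
    intersperse a (l₁ ++ l₂) = intersperse a l₁ ++ a :: intersperse a l₂
  | [], _, h, _ => absurd rfl h
  | [b], l₂, _, h₂ => by
    cases l₂ with
    | nil => exact absurd rfl h₂
    | cons c t => simp [intersperse_cons_cons]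
  | b :: c :: t, l₂, _, h₂ => by
    have ih := intersperse_append' a (c :: t) l₂ (by simp) h₂
    show intersperse a (b :: ((c :: t) ++ l₂)) = _
    rw [show b :: ((c :: t) ++ l₂) = b :: (c :: (t ++ l₂)) from rfl,
      show b :: (c :: (t ++ l₂)) = b :: ((c :: t) ++ l₂) from rfl]
    rw [show (b :: ((c :: t) ++ l₂)) = (b :: c :: (t ++ l₂)) from rfl,
      intersperse_cons_cons, show c :: (t ++ l₂) = (c :: t) ++ l₂ from rfl, ih,
      intersperse_cons_cons]
    simp

theorem reverse_intersperse' (a : γ) : ∀ l : List γ,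
    (intersperse a l).reverse = intersperse a l.reverse
  | [] => rfl
  | [b] => rfl
  | b :: c :: t => by
    rw [intersperse_cons_cons, reverse_cons, reverse_cons,
      reverse_intersperse' a (c :: t)]
    rw [show (b :: c :: t).reverse = (c :: t).reverse ++ [b] by simp]
    rw [intersperse_append' a ((c :: t).reverse) [b] (by simp) (by simp)]
    simp

theorem map_intersperse' {δ : Type*} (f : γ → δ) (a : γ) : ∀ l : List γ,
    (intersperse a l).map f = intersperse (f a) (l.map f)
  | [] => rfl
  | [b] => rfl
  | b :: c :: t => by
    simp only [intersperse_cons_cons, map_cons]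
    rw [map_intersperse' f a (c :: t)]
    simp only [map_cons]

theorem flatten_intersperse_nil : ∀ L : List (List γ),
    (intersperse ([] : List γ) L).flatten = L.flatten
  | [] => rfl
  | [l] => rfl
  | l :: m :: t => by
    rw [intersperse_cons_cons, flatten_cons, flatten_cons,
      flatten_intersperse_nil (m :: t), flatten_cons]
    simp

theorem flatten_intersperse_singletons (b : γ) : ∀ l : List γ,
    (intersperse [b] (l.map fun a => [a])).flatten = intersperse b l
  | [] => rfl
  | [a] => rfl
  | a :: c :: t => by
    have ih := flatten_intersperse_singletons b (c :: t)
    simp only [map_cons] at ih ⊢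
    rw [intersperse_cons_cons, flatten_cons, flatten_cons, ih, intersperse_cons_cons]
    simp

theorem padF_eq_flatten (u : List γ) :
    padF u = (intersperse [none] (u.map fun a => [some a])).flatten := by
  have := flatten_intersperse_singletons (none : Option γ) (u.map some)
  rw [map_map] at this
  exact this.symm

theorem filterMap_id_padF : ∀ u : List γ, (padF u).filterMap id = u
  | [] => rfl
  | [a] => rfl
  | a :: b :: t => by
    show (intersperse none (map some (a :: b :: t))).filterMap id = _
    rw [map_cons, map_cons, intersperse_cons_cons, filterMap_cons, filterMap_cons]
    have := filterMap_id_padF (b :: t)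
    simp only [padF, map_cons] at this
    simpa using this

theorem padF_ne_nil {u : List γ} (h : u ≠ []) : padF u ≠ [] := by
  cases u with
  | nil => exact absurd rfl h
  | cons a t => cases t <;> simp [padF, intersperse_cons_cons]

theorem padF_pal {u : List γ} (h : IsPal u) : IsPal (padF u) := by
  unfold IsPal padF at *
  rw [reverse_intersperse', ← map_reverse, h]

theorem padF_append {u v : List γ} (hu : u ≠ []) (hv : v ≠ []) :
    padF (u ++ v) = padF u ++ none :: padF v := by
  unfold padF
  rw [map_append, intersperse_append' none _ _ (by simpa) (by simpa)]

theorem flatten_intersperse_padF : ∀ ps : List (List γ), (∀ p ∈ ps, p ≠ []) →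
    (intersperse [none] (ps.map padF)).flatten = padF ps.flatten
  | [], _ => rfl
  | [p], _ => by simp
  | p :: q :: t, h => by
    have hq : (q :: t).flatten ≠ [] := by
      have : q ≠ [] := h q (by simp)
      simp only [flatten_cons]
      intro hc
      exact this (by simpa using congrArg (fun l => l.take q.length) hc)
    have ih := flatten_intersperse_padF (q :: t) (fun p hp => h p (by simp [hp]))
    simp only [map_cons] at ih ⊢
    rw [intersperse_cons_cons, flatten_cons, flatten_cons, ih,
      show (p :: q :: t).flatten = p ++ (q :: t).flatten from rfl,
      padF_append (h p (by simp)) hq]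
    simp

theorem flatten_filter_not_isEmpty : ∀ l : List (List γ),
    (l.filter fun p => !p.isEmpty).flatten = l.flatten
  | [] => rfl
  | p :: t => by
    rw [filter_cons]
    cases hp : p.isEmpty with
    | true =>
      rw [List.isEmpty_iff] at hp
      simp [hp, flatten_filter_not_isEmpty t]
    | false => simp [flatten_filter_not_isEmpty t]

theorem flatten_singletons : ∀ l : List γ, (l.map fun a => [a]).flatten = l
  | [] => rfl
  | a :: t => by simp [flatten_singletons t]

theorem isPal_singleton (a : γ) : IsPal [a] := rfl

theorem PPL_le_PL (u : List γ) (hu : u ≠ []) : PPL (padF u) ≤ PL u := by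
  have hne : {k | ∃ ps : List (List γ), ps.length = k ∧ (∀ p ∈ ps, p ≠ [] ∧ IsPal p) ∧
      ps.flatten = u}.Nonempty := by
    refine ⟨u.length, u.map (fun a => [a]), by simp, ?_, flatten_singletons u⟩
    intro p hp
    obtain ⟨a, _, rfl⟩ := mem_map.mp hp
    exact ⟨by simp, isPal_singleton a⟩
  obtain ⟨ps, hlen, hps, hfl⟩ := Nat.sInf_mem hne
  apply Nat.sInf_le
  refine ⟨ps.map padF, by simp [hlen]; rfl, ?_, ?_⟩
  · intro p hp
    obtain ⟨q, hq, rfl⟩ := mem_map.mp hp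
    exact ⟨padF_ne_nil (hps q hq).1, padF_pal (hps q hq).2⟩
  · rw [flatten_intersperse_padF ps (fun p hp => (hps p hp).1), hfl]

theorem PL_le_PPL (u : List γ) (hu : u ≠ []) : PL u ≤ PPL (padF u) := by
  have hne : {k | ∃ ps : List (List (Option γ)), ps.length = k ∧
      (∀ p ∈ ps, p ≠ [] ∧ IsPal p) ∧ (intersperse [none] ps).flatten = padF u}.Nonempty := by
    refine ⟨u.length, u.map (fun a => [some a]), by simp, ?_, (padF_eq_flatten u).symm⟩
    intro p hp
    obtain ⟨a, _, rfl⟩ := mem_map.mp hp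
    exact ⟨by simp, isPal_singleton _⟩
  obtain ⟨qs, hlen, hqs, hfl⟩ := Nat.sInf_mem hne
  have key : ((qs.map (filterMap id)).filter fun p => !p.isEmpty).flatten = u := by
    rw [flatten_filter_not_isEmpty]
    rw [← filterMap_flatten]
    have h1 : ((intersperse [none] qs).flatten).filterMap id = u := by
      rw [hfl, filterMap_id_padF]
    rw [filterMap_flatten, map_intersperse'] at h1
    have h2 : (filterMap id [(none : Option γ)]) = [] := rfl
    rw [h2, flatten_intersperse_nil, ← filterMap_flatten] at h1
    exact h1
  have hle : PL u ≤ ((qs.map (filterMap id)).filter fun p => !p.isEmpty).length := by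
    apply Nat.sInf_le
    refine ⟨_, rfl, ?_, key⟩
    intro p hp
    have hp1 : p ∈ qs.map (filterMap id) := mem_of_mem_filter hp
    have hp2 : ¬p.isEmpty := by simpa using of_mem_filter hp
    obtain ⟨q, hq, rfl⟩ := mem_map.mp hp1
    refine ⟨by simpa [List.isEmpty_iff] using hp2, ?_⟩
    show (filterMap id q).reverse = filterMap id q
    rw [← filterMap_reverse, (hqs q hq).2]
  calc PL u ≤ _ := hle
    _ ≤ (qs.map (filterMap id)).length := length_filter_le _ _
    _ = PPL (padF u) := by rw [length_map, hlen]; rfl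

end PalLenAux

/-- For an infinite word `x₀` over `Σ₀`, the palindromic lengths of its
nonempty finite factors are bounded iff the padded palindromic lengths of the padded
factors are bounded. -/
theorem statement1 {α : Type*} [Fintype α] (x₀ : ℕ → α) :
    (∃ K : ℕ, ∀ u : List α, u ≠ [] → PalLen.FactorOfInf u x₀ → PalLen.PL u ≤ K) ↔
    (∃ K : ℕ, ∀ u : List α, u ≠ [] → PalLen.FactorOfInf u x₀ →
      PalLen.PPL (PalLen.padF u) ≤ K) := by
  constructor
  · rintro ⟨K, hK⟩
    exact ⟨K, fun u hu hf => le_trans (PalLenAux.PPL_le_PL u hu) (hK u hu hf)⟩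
  · rintro ⟨K, hK⟩
    exact ⟨K, fun u hu hf => le_trans (PalLenAux.PL_le_PPL u hu) (hK u hu hf)⟩
end

section
/- If p_1 and p_2 are nonempty palindromes with order(p_1) < 2 and order(p_2) < 2, p_1 is a prefix of p_2, and |p_1| < |p_2|, then 2|p_1| < |p_2|. -/
section Aux

/-- a border gives a period -/
theorem border_period {α : Type*} (u w : List α) (hu : 1 ≤ u.length)
    (hlt : u.length < w.length) (hpre : u <+: w) (hsuf : u <:+ w) :
    PalLen.IsPeriod w (w.length - u.length) := by
  obtain ⟨s, hs⟩ := hpre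
  obtain ⟨t, ht⟩ := hsuf
  have hts : t.length = w.length - u.length := by
    have := congrArg List.length ht
    simp at this; omega
  refine ⟨by omega, fun i hi => ?_⟩
  have hiu : i < u.length := by omega
  have h1 : w[i]? = u[i]? := by
    rw [← hs, List.getElem?_append_left hiu]
  have h2 : w[i + (w.length - u.length)]? = u[i]? := by
    have he : i + (w.length - u.length) = t.length + i := by omega
    rw [he, ← ht, List.getElem?_append_right (by omega)]
    congr 1; omega
  rw [h1, h2]

theorem order_lt_two {α : Type*} (t : List α) (ht : t ≠ [])
    (ho : PalLen.wOrder t < 2) : t.length < 2 * PalLen.mper t := by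
  have hne : {ξ | PalLen.IsPeriod t ξ}.Nonempty :=
    ⟨t.length, ⟨List.length_pos_iff.mpr ht, fun i hi => by omega⟩⟩
  have hmem := Nat.sInf_mem hne
  have hpos : 1 ≤ PalLen.mper t := hmem.1
  unfold PalLen.wOrder at ho
  rw [div_lt_iff₀ (by exact_mod_cast hpos)] at ho
  exact_mod_cast ho

end Aux

/-- If `p₁, p₂` are nonempty palindromes of order `< 2`, `p₁` is a proper
prefix of `p₂`, then `2|p₁| < |p₂|`. -/
theorem statement2 {α : Type*} (p₁ p₂ : List α) (h₁ : p₁ ≠ []) (hp₁ : PalLen.IsPal p₁)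
    (h₂ : p₂ ≠ []) (hp₂ : PalLen.IsPal p₂)
    (ho₁ : PalLen.wOrder p₁ < 2) (ho₂ : PalLen.wOrder p₂ < 2)
    (hpre : p₁ <+: p₂) (hlt : p₁.length < p₂.length) :
    2 * p₁.length < p₂.length := by
  have hsuf : p₁ <:+ p₂ := by
    have := hpre.reverse
    rwa [hp₁, hp₂] at this
  have hper := border_period p₁ p₂ (List.length_pos_iff.mpr h₁) hlt hpre hsuf
  have hle : PalLen.mper p₂ ≤ p₂.length - p₁.length := Nat.sInf_le hper
  have := order_lt_two p₂ h₂ ho₂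
  omega
end

section
/- If (p_1, p_2) is a non-periodic palindromic couple and t is a nonempty prefix of the infinite word (p_1 p_2)^∞ with |t| ≥ 2|p_1 p_2|, then mper(t) = |p_1 p_2|. -/
namespace Statement3Aux

/-- `p` is a period of `f` on `[0, L)`. -/
def Per {β : Type*} (f : ℕ → β) (L p : ℕ) : Prop := ∀ i, i + p < L → f i = f (i + p)

lemma per_ext {β : Type*} {f : ℕ → β} {p g L : ℕ} (hp : 1 ≤ p) (hLp : p + g ≤ L - p)
    (h1 : Per f L p) (h2 : Per f (L - p) g) : Per f L g := by
  intro i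
  induction i using Nat.strong_induction_on with
  | _ i IH =>
    intro hig
    by_cases hc : i + g < L - p
    · exact h2 i hc
    · have hiL' : L - p ≤ i + g := le_of_not_gt hc
      have hip : p ≤ i := by omega
      have e1 : f i = f (i - p) := by
        have := h1 (i - p) (by omega)
        rw [Nat.sub_add_cancel hip] at this; exact this.symm
      have e2 : f (i + g) = f (i - p + g) := by
        have := h1 (i - p + g) (by omega)
        rw [show i - p + g + p = i + g by omega] at this
        exact this.symm
      rw [e1, e2]
      exact IH (i - p) (by omega) (by omega)

lemma fw_aux {β : Type*} (f : ℕ → β) : ∀ n p q L, p + q ≤ n → 1 ≤ p → p ≤ q → p + q ≤ L →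
    Per f L p → Per f L q → Per f L (Nat.gcd p q) := by
  intro n
  induction n with
  | zero => intro p q L h hp _ _ _ _; omega
  | succ n IH =>
    intro p q L hn hp hpq hL h1 h2
    rcases eq_or_lt_of_le hpq with heq | hlt
    · subst heq; rwa [Nat.gcd_self]
    · have hq' : 1 ≤ q - p := by omega
      have h1' : Per f (L - p) p := fun i hi => h1 i (by omega)
      have h2' : Per f (L - p) (q - p) := by
        intro i hi
        have e1 := h2 i (by omega)
        have e2 := h1 (i + (q - p)) (by omega)
        rw [show i + (q - p) + p = i + q by omega] at e2
        rw [e1, e2]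
      have hgcd : Nat.gcd p (q - p) = Nat.gcd p q := by
        conv_rhs => rw [show q = q - p + p by omega]
        exact (Nat.gcd_add_self_right _ _).symm
      have hrec : Per f (L - p) (Nat.gcd p q) := by
        rw [← hgcd]
        rcases le_total p (q - p) with hc | hc
        · exact IH p (q - p) (L - p) (by omega) hp hc (by omega) h1' h2'
        · rw [Nat.gcd_comm]
          exact IH (q - p) p (L - p) (by omega) hq' hc (by omega) h2' h1'
      have hgdvd : Nat.gcd p q ∣ q - p := Nat.dvd_sub (Nat.gcd_dvd_right p q) (Nat.gcd_dvd_left p q)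
      have hgle : Nat.gcd p q ≤ q - p := Nat.le_of_dvd (by omega) hgdvd
      exact per_ext hp (by omega) h1 hrec

lemma fw {β : Type*} {f : ℕ → β} {p q L : ℕ} (hp : 1 ≤ p) (hq : 1 ≤ q) (hL : p + q ≤ L)
    (h1 : Per f L p) (h2 : Per f L q) : Per f L (Nat.gcd p q) := by
  rcases le_total p q with hc | hc
  · exact fw_aux f (p + q) p q L le_rfl hp hc hL h1 h2
  · rw [Nat.gcd_comm]; exact fw_aux f (q + p) q p L le_rfl hq hc (by omega) h2 h1

lemma isPeriod_iff_per {α : Type*} (t : List α) (ξ : ℕ) :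
    PalLen.IsPeriod t ξ ↔ 1 ≤ ξ ∧ Per (fun i => t[i]?) t.length ξ := Iff.rfl

lemma length_wpow {α : Type*} (w : List α) : ∀ n, (PalLen.wpow w n).length = n * w.length := by
  intro n
  induction n with
  | zero => simp [PalLen.wpow]
  | succ n IH => simp [PalLen.wpow, IH]; ring

lemma wpow_add {α : Type*} (w : List α) (a b : ℕ) :
    PalLen.wpow w (a + b) = PalLen.wpow w a ++ PalLen.wpow w b := by
  induction a with
  | zero => simp [PalLen.wpow]
  | succ a IH => simp [PalLen.wpow, Nat.succ_add, IH]

lemma getElem?_wpow {α : Type*} (w : List α) (hw : w ≠ []) :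
    ∀ n i, i < n * w.length → (PalLen.wpow w n)[i]? = w[i % w.length]? := by
  intro n
  induction n with
  | zero => intro i hi; omega
  | succ n IH =>
    intro i hi
    by_cases hc : i < w.length
    · rw [PalLen.wpow, List.getElem?_append_left hc, Nat.mod_eq_of_lt hc]
    · push_neg at hc
      rw [PalLen.wpow, List.getElem?_append_right hc, IH (i - w.length) (by
        have := List.length_pos_iff.mpr hw; nlinarith [Nat.sub_add_cancel hc])]
      congr 1
      exact (Nat.mod_eq_sub_mod hc).symm

lemma isPeriod_of_prefix {α : Type*} {s t : List α} {ξ : ℕ} (h : PalLen.IsPeriod t ξ)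
    (hp : s <+: t) : PalLen.IsPeriod s ξ := by
  obtain ⟨u, rfl⟩ := hp
  refine ⟨h.1, fun i hi => ?_⟩
  have h2 := h.2 i (by simp; omega)
  rwa [List.getElem?_append_left (by omega), List.getElem?_append_left hi] at h2

end Statement3Aux

/-- If `(p₁, p₂)` is a non-periodic palindromic couple and `t` is a nonempty
prefix of `(p₁p₂)^∞` with `|t| ≥ 2|p₁p₂|`, then `mper(t) = |p₁p₂|`. -/
theorem statement3 {α : Type*} (p₁ p₂ t : List α) (h : PalLen.PalCouple p₁ p₂)
    (ht : t ≠ []) (hpre : PalLen.PrefixOfPow t (p₁ ++ p₂))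
    (hlen : 2 * (p₁ ++ p₂).length ≤ t.length) :
    PalLen.mper t = (p₁ ++ p₂).length := by
  classical
  obtain ⟨n, hpre⟩ := hpre
  have hwne : p₁ ++ p₂ ≠ [] := by
    intro hc
    exact h.2.2.1 (List.append_eq_nil_iff.mp hc).2
  have hq1 : 1 ≤ (p₁ ++ p₂).length := List.length_pos_iff.mpr hwne
  have htw : t.length ≤ n * (p₁ ++ p₂).length := by
    have := hpre.length_le
    rwa [Statement3Aux.length_wpow] at this
  have hn2 : 2 ≤ n := by nlinarith
  -- (p₁ ++ p₂).length is a period of t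
  have hqper : PalLen.IsPeriod t (p₁ ++ p₂).length := by
    refine ⟨hq1, fun i hi => ?_⟩
    have e : ∀ j, j < t.length → t[j]? = (p₁ ++ p₂)[j % (p₁ ++ p₂).length]? := by
      intro j hj
      obtain ⟨u, hu⟩ := hpre
      rw [show t[j]? = (t ++ u)[j]? from (List.getElem?_append_left hj).symm, hu,
        Statement3Aux.getElem?_wpow (p₁ ++ p₂) hwne n j (by omega)]
    rw [e i (by omega), e (i + (p₁ ++ p₂).length) hi, Nat.add_mod_right]
  -- p₁ ++ p₂ ++ p₁ is a prefix of t
  have hsp : p₁ ++ p₂ ++ p₁ <+: t := by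
    have h1 : p₁ ++ p₂ ++ p₁ <+: PalLen.wpow (p₁ ++ p₂) n := by
      have h2 : p₁ ++ p₂ ++ p₁ <+: (p₁ ++ p₂) ++ (p₁ ++ p₂) := by
        obtain ⟨v, hv⟩ := List.prefix_append p₁ p₂
        exact ⟨p₂, by rw [List.append_assoc, List.append_assoc]⟩
      have h3 : (p₁ ++ p₂) ++ (p₁ ++ p₂) <+: PalLen.wpow (p₁ ++ p₂) n := by
        have e1 : PalLen.wpow (p₁ ++ p₂) n =
            PalLen.wpow (p₁ ++ p₂) 2 ++ PalLen.wpow (p₁ ++ p₂) (n - 2) := by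
          rw [← Statement3Aux.wpow_add, Nat.add_sub_cancel' hn2]
        have e2 : PalLen.wpow (p₁ ++ p₂) 2 = (p₁ ++ p₂) ++ (p₁ ++ p₂) := by
          simp [PalLen.wpow]
        rw [e1, e2]
        exact List.prefix_append _ _
      exact h2.trans h3
    have hlen2 : (p₁ ++ p₂ ++ p₁).length ≤ t.length := by
      simp only [List.length_append] at hlen ⊢
      omega
    exact List.prefix_of_prefix_length_le h1 hpre hlen2
  -- minimality
  have hmin : ∀ ξ, PalLen.IsPeriod t ξ → (p₁ ++ p₂).length ≤ ξ := by
    intro ξ hξ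
    by_contra hcon
    push_neg at hcon
    have hg1 : 1 ≤ Nat.gcd ξ (p₁ ++ p₂).length := Nat.gcd_pos_of_pos_left _ hξ.1
    have hgdvd : Nat.gcd ξ (p₁ ++ p₂).length ∣ (p₁ ++ p₂).length := Nat.gcd_dvd_right _ _
    have hglt : Nat.gcd ξ (p₁ ++ p₂).length < (p₁ ++ p₂).length :=
      lt_of_le_of_lt (Nat.le_of_dvd hξ.1 (Nat.gcd_dvd_left _ _)) hcon
    have h2g : 2 * Nat.gcd ξ (p₁ ++ p₂).length ≤ (p₁ ++ p₂).length := by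
      obtain ⟨m, hm⟩ := hgdvd
      have : 2 ≤ m := by nlinarith
      nlinarith
    have hgper : PalLen.IsPeriod t (Nat.gcd ξ (p₁ ++ p₂).length) :=
      ⟨hg1, Statement3Aux.fw (f := fun i => t[i]?) (L := t.length) hξ.1 hq1 (by omega)
        hξ.2 hqper.2⟩
    have hsper : PalLen.IsPeriod (p₁ ++ p₂ ++ p₁) (Nat.gcd ξ (p₁ ++ p₂).length) :=
      Statement3Aux.isPeriod_of_prefix hgper hsp
    have hmle : PalLen.mper (p₁ ++ p₂ ++ p₁) ≤ Nat.gcd ξ (p₁ ++ p₂).length := Nat.sInf_le hsper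
    have hmpos : 1 ≤ PalLen.mper (p₁ ++ p₂ ++ p₁) :=
      (Nat.sInf_mem (⟨_, hsper⟩ :
        {ξ | PalLen.IsPeriod (p₁ ++ p₂ ++ p₁) ξ}.Nonempty)).1
    have hord : (2 : ℚ) ≤ PalLen.wOrder (p₁ ++ p₂ ++ p₁) := by
      rw [PalLen.wOrder, le_div_iff₀ (by exact_mod_cast hmpos)]
      have hkey : 2 * PalLen.mper (p₁ ++ p₂ ++ p₁) ≤ (p₁ ++ p₂ ++ p₁).length := by
        have hlb : (p₁ ++ p₂).length ≤ (p₁ ++ p₂ ++ p₁).length := by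
          simp only [List.length_append]; omega
        omega
      exact_mod_cast hkey
    exact absurd h.2.2.2 (not_lt.mpr hord)
  exact le_antisymm (Nat.sInf_le hqper) (le_csInf ⟨_, hqper⟩ hmin)
end

section
/- If (p_1, p_2) is a non-periodic palindromic couple, t is a prefix of the infinite word (p_1 p_2)^∞ such that p_1 p_2 p_1 is a prefix of t, ξ is a period of t, and |t| ≥ 4ξ, then |p_1 p_2| divides ξ. -/
namespace PalLenAux
open PalLen
variable {α : Type*}

lemma getElem?_of_prefix {s t : List α} (h : s <+: t) {i : ℕ} (hi : i < s.length) :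
    s[i]? = t[i]? := by
  obtain ⟨u, rfl⟩ := h
  rw [List.getElem?_append, if_pos hi]

lemma isPeriod_prefix {s t : List α} {ξ : ℕ} (h : s <+: t) (hp : IsPeriod t ξ) :
    IsPeriod s ξ := by
  refine ⟨hp.1, fun i hi => ?_⟩
  rw [getElem?_of_prefix h (by omega), getElem?_of_prefix h hi]
  have := h.length_le
  exact hp.2 i (by omega)

lemma wpow_length (w : List α) : ∀ n, (wpow w n).length = n * w.length
  | 0 => by simp [wpow]
  | n + 1 => by simp [wpow, wpow_length w n]; ring

lemma wpow_getElem? (w : List α) (hw : w ≠ []) :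
    ∀ n i, i < n * w.length → (wpow w n)[i]? = w[i % w.length]?
  | 0, i, hi => by simp at hi
  | n + 1, i, hi => by
    have hq : 0 < w.length := List.length_pos_iff.2 hw
    rw [wpow]
    rcases lt_or_ge i w.length with h1 | h1
    · rw [List.getElem?_append, if_pos h1, Nat.mod_eq_of_lt h1]
    · have hm : (n + 1) * w.length = n * w.length + w.length := by ring
      rw [List.getElem?_append, if_neg (not_lt.2 h1),
        wpow_getElem? w hw n (i - w.length) (by omega), Nat.mod_eq_sub_mod h1]

lemma isPeriod_of_prefix_wpow {t w : List α} (hw : w ≠ []) {n : ℕ} (h : t <+: wpow w n) :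
    IsPeriod t w.length := by
  have hq : 0 < w.length := List.length_pos_iff.2 hw
  refine ⟨hq, fun i hi => ?_⟩
  have hl : t.length ≤ n * w.length := by rw [← wpow_length]; exact h.length_le
  rw [getElem?_of_prefix h (by omega), getElem?_of_prefix h hi,
    wpow_getElem? w hw n i (by omega), wpow_getElem? w hw n (i + w.length) (by omega),
    Nat.add_mod_right]

lemma isPeriod_sub {t : List α} {p q : ℕ} (hp : IsPeriod t p) (hq : IsPeriod t q)
    (hlt : q < p) (hsum : p + q ≤ t.length) : IsPeriod t (p - q) := by
  have hq1 := hq.1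
  refine ⟨by omega, fun i hi => ?_⟩
  rcases lt_or_ge (i + p) t.length with h1 | h1
  · have e2 : t[i + (p - q)]? = t[i + p]? := by
      have := hq.2 (i + (p - q)) (by omega)
      rwa [show i + (p - q) + q = i + p by omega] at this
    rw [hp.2 i h1, ← e2]
  · have hiq : q ≤ i := by omega
    have e1 : t[i - q]? = t[i]? := by
      have := hq.2 (i - q) (by omega)
      rwa [show i - q + q = i by omega] at this
    have e2 : t[i - q]? = t[i + (p - q)]? := by
      have := hp.2 (i - q) (by omega)
      rwa [show i - q + p = i + (p - q) by omega] at this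
    rw [← e1, e2]

lemma isPeriod_gcd {t : List α} : ∀ N {p q : ℕ}, p + q ≤ N → IsPeriod t p → IsPeriod t q →
    p + q ≤ t.length → IsPeriod t (Nat.gcd p q)
  | 0, p, q, hN, hp, _, _ => absurd hp.1 (by omega)
  | N + 1, p, q, hN, hp, hq, hsum => by
    have hp1 := hp.1
    have hq1 := hq.1
    rcases lt_trichotomy p q with h | h | h
    · have hs := isPeriod_sub hq hp h (by omega)
      rw [← Nat.gcd_sub_self_right h.le]
      exact isPeriod_gcd N (by omega) hp hs (by omega)
    · rw [h, Nat.gcd_self]; exact hq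
    · have hs := isPeriod_sub hp hq h hsum
      rw [← Nat.gcd_sub_self_left h.le]
      exact isPeriod_gcd N (by omega) hs hq (by omega)

lemma mper_isPeriod {s : List α} (hs : s ≠ []) : IsPeriod s (mper s) := by
  have hmem : s.length ∈ {ξ | IsPeriod s ξ} :=
    ⟨List.length_pos_iff.2 hs, fun i hi => absurd hi (by omega)⟩
  exact Nat.sInf_mem ⟨_, hmem⟩

lemma mper_le {s : List α} {ξ : ℕ} (h : IsPeriod s ξ) : mper s ≤ ξ := Nat.sInf_le h

end PalLenAux

/-- If `(p₁, p₂)` is a non-periodic palindromic couple, `t` a prefix of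
`(p₁p₂)^∞` with `p₁p₂p₁` a prefix of `t`, `ξ` a period of `t` and `|t| ≥ 4ξ`, then
`|p₁p₂|` divides `ξ`. -/
theorem statement4 {α : Type*} (p₁ p₂ t : List α) (h : PalLen.PalCouple p₁ p₂)
    (hpre : PalLen.PrefixOfPow t (p₁ ++ p₂)) (hppp : p₁ ++ p₂ ++ p₁ <+: t)
    (ξ : ℕ) (hξ : PalLen.IsPeriod t ξ) (hlen : 4 * ξ ≤ t.length) :
    (p₁ ++ p₂).length ∣ ξ := by

  classical
  obtain ⟨hp1, hp2, hne, hord⟩ := h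
  obtain ⟨n, hn⟩ := hpre
  have hwne : p₁ ++ p₂ ≠ [] := fun hc => hne (List.append_eq_nil_iff.mp hc).2
  have hw1 : 0 < (p₁ ++ p₂).length := List.length_pos_iff.2 hwne
  have hq : PalLen.IsPeriod t (p₁ ++ p₂).length := PalLenAux.isPeriod_of_prefix_wpow hwne hn
  have hsne : p₁ ++ p₂ ++ p₁ ≠ [] := fun hc => hwne (List.append_eq_nil_iff.mp hc).1
  have hslen : (p₁ ++ p₂).length ≤ (p₁ ++ p₂ ++ p₁).length := by
    simp [List.length_append]
  have hm := PalLenAux.mper_isPeriod hsne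
  have hm1 : 1 ≤ PalLen.mper (p₁ ++ p₂ ++ p₁) := hm.1
  have hord2 : (p₁ ++ p₂ ++ p₁).length < 2 * PalLen.mper (p₁ ++ p₂ ++ p₁) := by
    have h0 : (0:ℚ) < (PalLen.mper (p₁ ++ p₂ ++ p₁) : ℚ) := by exact_mod_cast hm1
    rw [PalLen.wOrder, div_lt_iff₀ h0] at hord
    exact_mod_cast hord
  have hξs : PalLen.IsPeriod (p₁ ++ p₂ ++ p₁) ξ := PalLenAux.isPeriod_prefix hppp hξ
  have hmle : PalLen.mper (p₁ ++ p₂ ++ p₁) ≤ ξ := PalLenAux.mper_le hξs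
  have hq2 : (p₁ ++ p₂).length < 2 * ξ := by omega
  have hsum : ξ + (p₁ ++ p₂).length ≤ t.length := by omega
  have hg : PalLen.IsPeriod t (Nat.gcd ξ (p₁ ++ p₂).length) :=
    PalLenAux.isPeriod_gcd (ξ + (p₁ ++ p₂).length) le_rfl hξ hq hsum
  have hgs := PalLenAux.isPeriod_prefix hppp hg
  have hgle : PalLen.mper (p₁ ++ p₂ ++ p₁) ≤ Nat.gcd ξ (p₁ ++ p₂).length :=
    PalLenAux.mper_le hgs
  have hdvd : Nat.gcd ξ (p₁ ++ p₂).length ∣ (p₁ ++ p₂).length := Nat.gcd_dvd_right _ _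
  have heq : Nat.gcd ξ (p₁ ++ p₂).length = (p₁ ++ p₂).length := by
    by_contra hne2
    obtain ⟨c, hc⟩ := hdvd
    have hc0 : c ≠ 0 := by rintro rfl; rw [mul_zero] at hc; omega
    have hc1 : c ≠ 1 := by rintro rfl; rw [mul_one] at hc; exact hne2 hc.symm
    have h2 : 2 * Nat.gcd ξ (p₁ ++ p₂).length ≤ (p₁ ++ p₂).length := by
      calc 2 * Nat.gcd ξ (p₁ ++ p₂).length
          = Nat.gcd ξ (p₁ ++ p₂).length * 2 := by ring
        _ ≤ Nat.gcd ξ (p₁ ++ p₂).length * c :=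
            Nat.mul_le_mul_left _ (by omega)
        _ = (p₁ ++ p₂).length := hc.symm
    omega
  have := Nat.gcd_dvd_left ξ (p₁ ++ p₂).length
  rwa [heq] at this
end

section
/- If (p_1, p_2) and (p_3, p_4) are non-periodic palindromic couples with p_1 p_2 = p_3 p_4, then p_1 = p_3 and p_2 = p_4; that is, for every nonempty word u there is at most one non-periodic palindromic couple (p_1, p_2) with p_1 p_2 = u. -/
namespace PalLen
variable {α : Type*}

lemma isPeriod_of_overlap (t w s' : List α) (hw : 1 ≤ w.length)
    (h : t ++ s' = w ++ t) : IsPeriod t w.length := by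
  refine ⟨hw, fun i hi => ?_⟩
  have h1 : (t ++ s')[i + w.length]? = t[i + w.length]? :=
    List.getElem?_append_left hi
  have h2 : (w ++ t)[i + w.length]? = t[i]? := by
    rw [List.getElem?_append_right (by omega)]
    congr 1; omega
  rw [← h1, h, h2]

lemma isPeriod_trivial (t : List α) : IsPeriod t (t.length + 1) :=
  ⟨by omega, fun i hi => by omega⟩

lemma mper_pos (t : List α) : 1 ≤ mper t := by
  have : mper t ∈ {ξ | IsPeriod t ξ} :=
    Nat.sInf_mem ⟨t.length + 1, isPeriod_trivial t⟩
  exact this.1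

lemma length_lt_of_wOrder (t : List α) (h : wOrder t < 2) :
    t.length < 2 * mper t := by
  have hm := mper_pos t
  have hmq : (0 : ℚ) < (mper t : ℚ) := by exact_mod_cast hm
  rw [wOrder, div_lt_iff₀ hmq] at h
  exact_mod_cast (by linarith : (t.length : ℚ) < 2 * (mper t : ℚ))

lemma no_longer (p₁ p₂ p₃ p₄ : List α) (h₂ : PalCouple p₃ p₄)
    (hp1 : p₁.reverse = p₁) (hp2 : p₂.reverse = p₂)
    (heq : p₁ ++ p₂ = p₃ ++ p₄) (hlt : p₁.length < p₃.length) : False := by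
  obtain ⟨hp3, hp4, hp4ne, hord⟩ := h₂
  set s : List α := p₃.drop p₁.length with hs
  have hp3eq : p₃ = p₁ ++ s := by
    have h1 : p₁ = p₃.take p₁.length := by
      have := congrArg (List.take p₁.length) heq
      rwa [List.take_append_of_le_length le_rfl, List.take_length,
        List.take_append_of_le_length hlt.le] at this
    conv_lhs => rw [← List.take_append_drop p₁.length p₃, ← h1]
  have hslen : 1 ≤ s.length := by
    have := congrArg List.length hp3eq
    simp at this; omega
  have hp2eq : p₂ = s ++ p₄ := by
    rw [hp3eq, List.append_assoc] at heq
    exact List.append_cancel_left heq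
  -- key palindrome identities
  have key1 : ∀ X : List α, s.reverse ++ (p₁ ++ X) = p₁ ++ (s ++ X) := by
    have h0 : s.reverse ++ p₁ = p₁ ++ s := by
      have hh : p₃.reverse = p₃ := hp3
      rw [hp3eq, List.reverse_append, hp1] at hh
      exact hh
    intro X; rw [← List.append_assoc, h0, List.append_assoc]
  have key2 : ∀ X : List α, s ++ (p₄ ++ X) = p₄ ++ (s.reverse ++ X) := by
    have h0 : s ++ p₄ = p₄ ++ s.reverse := by
      have hh : p₂.reverse = p₂ := hp2
      rw [hp2eq, List.reverse_append, hp4] at hh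
      exact hh.symm
    intro X; rw [← List.append_assoc, h0, List.append_assoc]
  set T : List α := p₃ ++ p₄ ++ p₃ with hT
  have hcomm : s.reverse ++ T = T ++ s := by
    rw [hT, hp3eq]
    simp only [List.append_assoc]
    rw [key1 (s ++ (p₄ ++ (p₁ ++ s))), key2 (p₁ ++ s), key1 s]
  have hper : IsPeriod T s.reverse.length :=
    isPeriod_of_overlap T s.reverse s (by simpa using hslen) hcomm.symm
  have hmle : mper T ≤ s.length := by
    have := Nat.sInf_le (show s.reverse.length ∈ {ξ | IsPeriod T ξ} from hper)
    simpa [mper] using this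
  have hlen := length_lt_of_wOrder T hord
  have hTlen : T.length = p₃.length + p₄.length + p₃.length := by simp [hT]; ring
  have hsle : s.length ≤ p₃.length := by
    have := congrArg List.length hp3eq; simp at this; omega
  have hp4len : 1 ≤ p₄.length := List.length_pos_iff.mpr hp4ne
  omega


end PalLen
/-- A nonempty word admits at most one factorization as a
non-periodic palindromic couple. -/
theorem statement5 {α : Type*} (p₁ p₂ p₃ p₄ : List α)
    (h₁ : PalLen.PalCouple p₁ p₂) (h₂ : PalLen.PalCouple p₃ p₄)
    (heq : p₁ ++ p₂ = p₃ ++ p₄) :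
    p₁ = p₃ ∧ p₂ = p₄ := by
  rcases lt_trichotomy p₁.length p₃.length with h | h | h
  · exact (PalLen.no_longer p₁ p₂ p₃ p₄ h₂ h₁.1 h₁.2.1 heq h).elim
  · exact List.append_inj heq h
  · exact (PalLen.no_longer p₃ p₄ p₁ p₂ h₁ h₂.1 h₂.2.1 heq.symm h).elim
end

section
/- If u is a nonempty finite word, p is a nonempty palindrome, ξ is a period of the word u p, and ξ ≤ |p|, then ξ is a period of the word u p u^R. -/
theorem period_reverse {α : Type*} {t : List α} {ξ : ℕ} (h : PalLen.IsPeriod t ξ) :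
    PalLen.IsPeriod t.reverse ξ := by
  refine ⟨h.1, fun i hi => ?_⟩
  rw [List.length_reverse] at hi
  have h1 : i < t.length := by omega
  rw [List.getElem?_reverse h1, List.getElem?_reverse hi]
  have hj : t.length - 1 - (i + ξ) + ξ = t.length - 1 - i := by omega
  have := h.2 (t.length - 1 - (i + ξ)) (by omega)
  rw [hj] at this
  exact this.symm

/-- If `u` is nonempty, `p` is a nonempty palindrome, `ξ` a period of `u p`
with `ξ ≤ |p|`, then `ξ` is a period of `u p u^R`. -/
theorem statement7 {α : Type*} (u p : List α) (hu : u ≠ []) (hp : p ≠ [])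
    (hpal : PalLen.IsPal p) (ξ : ℕ) (hper : PalLen.IsPeriod (u ++ p) ξ)
    (hle : ξ ≤ p.length) :
    PalLen.IsPeriod (u ++ p ++ u.reverse) ξ := by
  have hsuf : PalLen.IsPeriod (p ++ u.reverse) ξ := by
    have : (u ++ p).reverse = p ++ u.reverse := by
      rw [List.reverse_append, hpal]
    rw [← this]
    exact period_reverse hper
  refine ⟨hper.1, fun i hi => ?_⟩
  simp only [List.length_append, List.length_reverse] at hi
  by_cases hc : i + ξ < u.length + p.length
  · rw [List.getElem?_append_left (by simp; omega),
      List.getElem?_append_left (l₂ := u.reverse) (by simp; omega)]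
    exact hper.2 i (by simpa using hc)
  · have hi2 : u.length ≤ i := by omega
    have e1 : (u ++ p ++ u.reverse)[i]? = (p ++ u.reverse)[i - u.length]? := by
      rw [List.append_assoc]
      exact List.getElem?_append_right (by omega)
    have e2 : (u ++ p ++ u.reverse)[i + ξ]? = (p ++ u.reverse)[i + ξ - u.length]? := by
      rw [List.append_assoc]
      exact List.getElem?_append_right (by omega)
    have key := hsuf.2 (i - u.length)
      (by rw [List.length_append, List.length_reverse]; omega)
    rw [show i - u.length + ξ = i + ξ - u.length by omega] at key
    rw [e1, e2, key]
end
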